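/- Under the hypotheses of Theorem 1, the limit potential satisfies lim_{x→+∞} V_∞(t,x) = 0 for each fixed t ∈ ℝ. -/

import Mathlib

noncomputable section

def solitonEntry (κ c : ℕ → ℝ) (t x : ℝ) (j l : ℕ) : ℝ :=
  c j * c l / (κ j + κ l) * Real.exp (4 * ((κ j) ^ 3 + (κ l) ^ 3) * t - (κ j + κ l) * x)

def tauN (κ c : ℕ → ℝ) (N : ℕ) (t x : ℝ) : ℝ :=
  Matrix.det ((1 : Matrix (Fin N) (Fin N) ℝ) +
    Matrix.of fun j l : Fin N => solitonEntry κ c t x j l)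

def tauInf (κ c : ℕ → ℝ) (t x : ℝ) : ℝ :=
  Filter.limUnder Filter.atTop (fun N => tauN κ c N t x)

/-- `V_∞(t,x) = -2 ∂²ₓ ln det₁(1 + C_∞(t,x))`. -/
def Vinf (κ c : ℕ → ℝ) (t x : ℝ) : ℝ :=
  -2 * iteratedDeriv 2 (fun y => Real.log (tauInf κ c t y)) x

open Filter Topology Real Matrix Finset MeasureTheory

/-!
Expanding `det (1 + A)` into principal minors shows that `τ_N(t, x)` is a partial sum of the
exponential series `∑_S a_S e^{-b_S x}` over finite `S ⊆ ℕ`, where `a_S` is the principal minor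
of `C(t, 0)` on `S` and `b_S = 2 ∑_{j ∈ S} κ_j`. Since
`1 / (κ_j + κ_l) = ∫₀^∞ e^{-κ_j s} e^{-κ_l s} ds`, every finite section of `C(t, x)` is positive
semidefinite, so all minors are nonnegative, and `det (1 + A) ≤ exp (tr A)` bounds the partial
sums by `exp (∑_j C_jj)`, which is finite because `κ` is bounded and `∑ c_j² / κ_j < ∞`. Hence
`τ_∞` is this series for every `x`; it may be differentiated termwise, and by dominated
convergence `τ_∞ → a_∅ = 1` while `τ_∞', τ_∞'' → 0` as `x → ∞`. Then
`V_∞ = -2 (τ_∞'' τ_∞ - τ_∞'²) / τ_∞² → 0`.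
-/

namespace Matrix

variable {ι m R : Type*}

def principalMinor [CommRing R] [DecidableEq ι] (K : Matrix ι ι R) (S : Finset ι) : R :=
  (K.submatrix (Subtype.val : S → ι) Subtype.val).det

theorem det_one_add_eq_sum_det_submatrix [CommRing R] [Fintype m] [DecidableEq m]
    (M : Matrix m m R) :
    det (1 + M) = ∑ s : Finset m, (M.submatrix (Subtype.val : s → m) Subtype.val).det := by
  have h : det (M + 1) = ∑ s : Finset m, det (of (s.piecewise M.row (row 1))) :=
    detRowAlternating.toMultilinearMap.map_add_univ M.row (row 1)
  rw [add_comm, h]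
  exact sum_congr rfl fun s _ => det_piecewise_one_eq_submatrix_det M s

theorem det_one_add_submatrix_eq_sum_principalMinor [CommRing R] [DecidableEq ι] [Fintype m]
    [DecidableEq m] (K : Matrix ι ι R) (e : m ↪ ι) :
    det (1 + K.submatrix e e) = ∑ S ∈ (univ.map e).powerset, K.principalMinor S := by
  have hpow : (univ.map e).powerset = univ.map (mapEmbedding e).toEmbedding := by
    ext S
    simp [subset_map_iff, eq_comm]
  rw [det_one_add_eq_sum_det_submatrix, hpow, sum_map]
  exact sum_congr rfl fun s _ =>
    det_submatrix_equiv_self (equivMap e s) (K.submatrix (Subtype.val : s.map e → ι) Subtype.val)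

theorem principalMinor_of_mul_mul [CommRing R] [DecidableEq ι] (K : Matrix ι ι R) (d : ι → R)
    (S : Finset ι) :
    (of fun i j => d i * d j * K i j).principalMinor S
      = (∏ i ∈ S, d i) ^ 2 * K.principalMinor S := by
  have h : (of fun i j => d i * d j * K i j).submatrix (Subtype.val : S → ι) Subtype.val
      = diagonal (fun i : S => d i) * K.submatrix Subtype.val Subtype.val
        * diagonal (fun i : S => d i) := by
    ext i j
    simp only [submatrix_apply, of_apply, diagonal_mul, mul_diagonal]
    ring
  rw [principalMinor, principalMinor, h, det_mul, det_mul, det_diagonal, prod_coe_sort S d]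
  ring

theorem IsHermitian.det_one_add_eq_prod_eigenvalues [Fintype m] [DecidableEq m]
    {A : Matrix m m ℝ} (hA : A.IsHermitian) : det (1 + A) = ∏ i, (1 + hA.eigenvalues i) := by
  have hchar := congrArg (Polynomial.eval (-1)) hA.charpoly_eq
  have hneg : scalar m (-1 : ℝ) - A = -(1 + A) := by rw [map_neg, map_one, neg_add']
  simp only [eval_charpoly, hneg, det_neg, Polynomial.eval_prod, Polynomial.eval_sub,
    Polynomial.eval_X, Polynomial.eval_C, RCLike.ofReal_real_eq_id, id,
    show ∀ x : ℝ, -1 - x = -1 * (1 + x) from fun x => by ring, prod_mul_distrib, prod_const,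
    card_univ] at hchar
  exact mul_left_cancel₀ (pow_ne_zero _ (by norm_num)) hchar

theorem PosSemidef.det_one_add_le_exp_trace [Fintype m] [DecidableEq m] {A : Matrix m m ℝ}
    (hA : A.PosSemidef) : det (1 + A) ≤ exp A.trace := by
  rw [hA.isHermitian.det_one_add_eq_prod_eigenvalues, hA.isHermitian.trace_eq_sum_eigenvalues,
    exp_sum]
  exact prod_le_prod (fun i _ => by linarith [hA.eigenvalues_nonneg i]) fun i _ => by
    simpa [add_comm] using add_one_le_exp (hA.isHermitian.eigenvalues i)

theorem summable_principalMinor [DecidableEq ι] {K : Matrix ι ι ℝ}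
    (hK : ∀ S : Finset ι, (K.submatrix (Subtype.val : S → ι) Subtype.val).PosSemidef)
    (hdiag : Summable K.diag) : Summable K.principalMinor := by
  have hdiag_nonneg : ∀ i, 0 ≤ K i i := fun i =>
    (hK {i}).diag_nonneg (i := ⟨i, mem_singleton_self i⟩)
  refine summable_of_sum_le (c := exp (∑' i, K i i)) (fun S => (hK S).det_nonneg) fun u => ?_
  set T := u.sup id
  calc ∑ S ∈ u, K.principalMinor S ≤ ∑ S ∈ T.powerset, K.principalMinor S :=
        sum_le_sum_of_subset_of_nonneg (fun S hS => mem_powerset.2 (le_sup (f := id) hS))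
          fun S _ _ => (hK S).det_nonneg
    _ = det (1 + K.submatrix (Subtype.val : T → ι) Subtype.val) := by
        have h := det_one_add_submatrix_eq_sum_principalMinor K (.subtype (· ∈ T))
        rw [univ_eq_attach, attach_map_val] at h
        exact h.symm
    _ ≤ exp (∑ i ∈ T, K i i) := by
        simpa [trace, ← sum_coe_sort T] using (hK T).det_one_add_le_exp_trace
    _ ≤ exp (∑' i, K i i) := exp_le_exp.2 (hdiag.sum_le_tsum T fun i _ => hdiag_nonneg i)

theorem posSemidef_of_mul_div_add [Fintype m] {k : m → ℝ} (hk : ∀ i, 0 < k i) (u : m → ℝ) :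
    (of fun i j => u i * u j / (k i + k j)).PosSemidef := by
  refine .of_dotProduct_mulVec_nonneg ?_ fun v => ?_
  · ext i j
    simp [mul_comm, add_comm]
  -- `1 / (k i + k j) = ∫₀^∞ e^{-k i s} e^{-k j s} ds` turns the quadratic form into `∫ (∑ …)²`.
  set q : m → ℝ := fun i => v i * u i
  have hexp : ∀ i j s, q i * exp (-k i * s) * (q j * exp (-k j * s))
      = q i * q j * exp (-(k i + k j) * s) := fun i j s => by
    rw [neg_add, add_mul, exp_add]; ring
  have hint : ∀ i j, IntegrableOn (fun s => q i * exp (-k i * s) * (q j * exp (-k j * s)))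
      (Set.Ioi 0) := fun i j => by
    simp_rw [hexp]
    exact (integrableOn_exp_mul_Ioi (by linarith [hk i, hk j]) 0).const_mul _
  have hentry : ∀ i j, ∫ s in Set.Ioi 0, q i * exp (-k i * s) * (q j * exp (-k j * s))
      = q i * q j / (k i + k j) := fun i j => by
    simp_rw [hexp]
    rw [integral_const_mul, integral_exp_mul_Ioi (by linarith [hk i, hk j])]
    have : k i + k j ≠ 0 := by linarith [hk i, hk j]
    rw [mul_zero, exp_zero]
    field_simp
  calc 0 ≤ ∫ s in Set.Ioi 0, (∑ i, q i * exp (-k i * s)) ^ 2 :=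
        integral_nonneg fun s => sq_nonneg _
    _ = ∑ i, ∑ j, q i * q j / (k i + k j) := by
        simp_rw [sq, sum_mul_sum]
        rw [integral_finsetSum _ fun i _ => integrable_finsetSum _ fun j _ => hint i j]
        refine sum_congr rfl fun i _ => ?_
        rw [integral_finsetSum _ fun j _ => hint i j]
        exact sum_congr rfl fun j _ => hentry i j
    _ = star v ⬝ᵥ (of fun i j => u i * u j / (k i + k j)) *ᵥ v := by
        simp only [dotProduct, mulVec, of_apply, star_trivial, Pi.star_apply, mul_sum, q]
        exact sum_congr rfl fun i _ => sum_congr rfl fun j _ => by ring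

end Matrix

theorem tendsto_sum_powerset_range {α : Type*} [AddCommMonoid α] [TopologicalSpace α]
    {f : Finset ℕ → α} (hf : Summable f) :
    Tendsto (fun N => ∑ S ∈ (range N).powerset, f S) atTop (𝓝 (∑' S, f S)) :=
  hf.hasSum.comp <| tendsto_atTop_finset_of_monotone
    (fun _ _ h => powerset_mono.2 (range_subset_range.2 h))
    fun S => ⟨S.sup id + 1, mem_powerset.2 fun _ hk =>
      mem_range.2 (Nat.lt_succ_of_le (le_sup (f := id) hk))⟩

section ExpSum

variable {ι : Type*}

def expSum (a b : ι → ℝ) (x : ℝ) : ℝ := ∑' i, a i * exp (-b i * x)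

variable {a b : ι → ℝ}

theorem summable_norm_neg_mul_mul_exp (hb : ∀ i, 0 ≤ b i)
    (ha : ∀ x, Summable fun i => ‖a i‖ * exp (-b i * x)) (x : ℝ) :
    Summable fun i => ‖-b i * a i‖ * exp (-b i * x) := by
  refine (ha (x - 1)).of_nonneg_of_le (fun i => by positivity) fun i => ?_
  have hbexp : b i * exp (-b i * x) ≤ exp (-b i * (x - 1)) :=
    calc b i * exp (-b i * x) ≤ exp (b i) * exp (-b i * x) := by
          gcongr; linarith [add_one_le_exp (b i)]
      _ = exp (-b i * (x - 1)) := by rw [← exp_add]; ring_nf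
  rw [norm_mul, norm_neg, norm_of_nonneg (hb i), mul_comm (b i), mul_assoc]
  exact mul_le_mul_of_nonneg_left hbexp (norm_nonneg _)

theorem hasDerivAt_expSum (hb : ∀ i, 0 ≤ b i)
    (ha : ∀ x, Summable fun i => ‖a i‖ * exp (-b i * x)) (x : ℝ) :
    HasDerivAt (expSum a b) (expSum (fun i => -b i * a i) b x) x := by
  have hx : x ∈ Set.Ioi (x - 1) := sub_one_lt x
  refine hasDerivAt_tsum_of_isPreconnected (g := fun i y => a i * exp (-b i * y))
    (g' := fun i y => -b i * a i * exp (-b i * y)) (summable_norm_neg_mul_mul_exp hb ha (x - 1))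
    isOpen_Ioi isPreconnected_Ioi (fun i y _ => ?_) (fun i y hy => ?_) hx ?_ hx
  · exact (((hasDerivAt_id' y).const_mul (-b i)).exp.const_mul (a i)).congr_deriv (by ring)
  · have := mul_le_mul_of_nonneg_left (Set.mem_Ioi.1 hy).le (hb i)
    rw [norm_mul, norm_of_nonneg (exp_pos _).le]
    exact mul_le_mul_of_nonneg_left (exp_le_exp.2 (by linarith)) (norm_nonneg _)
  · exact (ha x).of_norm_bounded fun i => by rw [norm_mul, norm_of_nonneg (exp_pos _).le]

theorem tendsto_expSum_atTop (hb : ∀ i, 0 ≤ b i)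
    (ha : ∀ x, Summable fun i => ‖a i‖ * exp (-b i * x)) :
    Tendsto (expSum a b) atTop (𝓝 (∑' i, if b i = 0 then a i else 0)) := by
  refine tendsto_tsum_of_dominated_convergence (ha 0) (fun i => ?_) ?_
  · split_ifs with hbi
    · simp [hbi]
    · have hexp : Tendsto (fun x => exp (-b i * x)) atTop (𝓝 0) :=
        tendsto_exp_atBot.comp <| tendsto_id.const_mul_atTop_of_neg <|
          neg_lt_zero.2 ((hb i).lt_of_ne' hbi)
      simpa using hexp.const_mul (a i)
  · filter_upwards [eventually_ge_atTop 0] with x hx i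
    rw [norm_mul, norm_of_nonneg (exp_pos _).le]
    exact mul_le_mul_of_nonneg_left (exp_le_exp.2 (by nlinarith [hb i])) (norm_nonneg _)

theorem tendsto_expSum_neg_mul_atTop (hb : ∀ i, 0 ≤ b i)
    (ha : ∀ x, Summable fun i => ‖a i‖ * exp (-b i * x)) :
    Tendsto (expSum (fun i => -b i * a i) b) atTop (𝓝 0) := by
  have h := tendsto_expSum_atTop hb (summable_norm_neg_mul_mul_exp hb ha)
  rwa [tsum_congr fun i => show (if b i = 0 then -b i * a i else 0) = 0 by
    split_ifs with hbi <;> simp [hbi], tsum_zero] at h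

end ExpSum

theorem tendsto_iteratedDeriv_two_log {f f' f'' : ℝ → ℝ} {L : ℝ} (hL : L ≠ 0)
    (hf : ∀ x, HasDerivAt f (f' x) x) (hf' : ∀ x, HasDerivAt f' (f'' x) x)
    (h : Tendsto f atTop (𝓝 L)) (h' : Tendsto f' atTop (𝓝 0)) (h'' : Tendsto f'' atTop (𝓝 0)) :
    Tendsto (iteratedDeriv 2 fun x => log (f x)) atTop (𝓝 0) := by
  obtain ⟨A, hA⟩ := eventually_atTop.1 (h.eventually_ne hL)
  have hlog' : ∀ x > A, deriv (fun y => log (f y)) =ᶠ[𝓝 x] fun y => f' y / f y :=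
    fun x hx => by
      filter_upwards [Ioi_mem_nhds hx] with y hy
      exact ((hf y).log (hA y (Set.mem_Ioi.1 hy).le)).deriv
  have hlog'' : ∀ x > A,
      iteratedDeriv 2 (fun y => log (f y)) x = (f'' x * f x - f' x * f' x) / f x ^ 2 :=
    fun x hx => by
      rw [iteratedDeriv_succ, iteratedDeriv_one, (hlog' x hx).deriv_eq]
      exact ((hf' x).div (hf x) (hA x hx.le)).deriv
  have hlim := ((h''.mul h).sub (h'.mul h')).div (h.pow 2) (pow_ne_zero 2 hL)
  rw [zero_mul, mul_zero, sub_zero, zero_div] at hlim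
  exact hlim.congr' (eventually_gt_atTop A |>.mono fun x hx => (hlog'' x hx).symm)

section Soliton

variable (κ c : ℕ → ℝ) (t : ℝ)

def solitonKernel (x : ℝ) : Matrix ℕ ℕ ℝ := of (solitonEntry κ c t x)

def solitonCoeff (S : Finset ℕ) : ℝ := (solitonKernel κ c t 0).principalMinor S

def solitonRate (S : Finset ℕ) : ℝ := 2 * ∑ j ∈ S, κ j

theorem solitonEntry_eq_mul_div (x : ℝ) (j l : ℕ) :
    solitonEntry κ c t x j l
      = c j * exp (4 * κ j ^ 3 * t - κ j * x) * (c l * exp (4 * κ l ^ 3 * t - κ l * x))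
        / (κ j + κ l) := by
  rw [solitonEntry, mul_mul_mul_comm, ← exp_add]
  ring_nf

theorem solitonKernel_eq_of_mul_mul (x : ℝ) :
    solitonKernel κ c t x
      = of fun j l => exp (-κ j * x) * exp (-κ l * x) * solitonKernel κ c t 0 j l := by
  ext j l
  simp only [solitonKernel, of_apply, solitonEntry]
  rw [show 4 * (κ j ^ 3 + κ l ^ 3) * t - (κ j + κ l) * x
      = 4 * (κ j ^ 3 + κ l ^ 3) * t - (κ j + κ l) * 0 + -κ j * x + -κ l * x by ring,
    exp_add, exp_add]
  ring

theorem principalMinor_solitonKernel (x : ℝ) (S : Finset ℕ) :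
    (solitonKernel κ c t x).principalMinor S
      = solitonCoeff κ c t S * exp (-solitonRate κ S * x) := by
  rw [solitonKernel_eq_of_mul_mul, principalMinor_of_mul_mul, ← exp_sum, ← exp_nat_mul,
    solitonCoeff, solitonRate, mul_comm]
  congr 2
  rw [← sum_mul, sum_neg_distrib]
  push_cast
  ring

variable {κ}

theorem posSemidef_solitonKernel_submatrix (hκ : ∀ j, 0 < κ j) (x : ℝ) (S : Finset ℕ) :
    ((solitonKernel κ c t x).submatrix (Subtype.val : S → ℕ) Subtype.val).PosSemidef := by
  convert posSemidef_of_mul_div_add (fun j : S => hκ j)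
    fun j : S => c j * exp (4 * κ j ^ 3 * t - κ j * x) using 1
  ext j l
  exact solitonEntry_eq_mul_div κ c t x j l

theorem summable_solitonKernel_diag (hκ : ∀ j, 0 < κ j) (hbd : ∃ M, ∀ j, κ j ≤ M)
    (hsum : Summable fun j => c j ^ 2 / κ j) (x : ℝ) :
    Summable (solitonKernel κ c t x).diag := by
  obtain ⟨M, hM⟩ := hbd
  refine (hsum.mul_left (exp (8 * M ^ 3 * |t| + 2 * M * |x|) / 2)).of_nonneg_of_le
    (fun j => ?_) fun j => ?_
  · simp only [diag_apply, solitonKernel, of_apply, solitonEntry]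
    exact mul_nonneg (div_nonneg (mul_self_nonneg _) (by linarith [hκ j])) (exp_pos _).le
  · have hexp :
        4 * (κ j ^ 3 + κ j ^ 3) * t - (κ j + κ j) * x ≤ 8 * M ^ 3 * |t| + 2 * M * |x| := by
      have hκ3 : κ j ^ 3 * t ≤ M ^ 3 * |t| :=
        (le_abs_self _).trans <| by
          rw [abs_mul, abs_of_pos (pow_pos (hκ j) 3)]
          exact mul_le_mul_of_nonneg_right (pow_le_pow_left₀ (hκ j).le (hM j) 3) (abs_nonneg t)
      have hκx : -(κ j * x) ≤ M * |x| :=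
        (neg_le_abs _).trans <| by
          rw [abs_mul, abs_of_pos (hκ j)]
          exact mul_le_mul_of_nonneg_right (hM j) (abs_nonneg x)
      linarith
    simp only [diag_apply, solitonKernel, of_apply, solitonEntry]
    calc c j * c j / (κ j + κ j) * exp (4 * (κ j ^ 3 + κ j ^ 3) * t - (κ j + κ j) * x)
        ≤ c j * c j / (κ j + κ j) * exp (8 * M ^ 3 * |t| + 2 * M * |x|) := by
          have := div_nonneg (mul_self_nonneg (c j)) (by linarith [hκ j] : 0 ≤ κ j + κ j)
          gcongr
      _ = exp (8 * M ^ 3 * |t| + 2 * M * |x|) / 2 * (c j ^ 2 / κ j) := by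
          field_simp
          ring

theorem tauN_eq_sum_principalMinor (N : ℕ) (x : ℝ) :
    tauN κ c N t x = ∑ S ∈ (range N).powerset, (solitonKernel κ c t x).principalMinor S := by
  rw [tauN, show (of fun j l : Fin N => solitonEntry κ c t x j l)
      = (solitonKernel κ c t x).submatrix Fin.valEmbedding Fin.valEmbedding from rfl,
    det_one_add_submatrix_eq_sum_principalMinor, Fin.map_valEmbedding_univ, Nat.Iio_eq_range]

theorem tauInf_eq_expSum (hκ : ∀ j, 0 < κ j) (hbd : ∃ M, ∀ j, κ j ≤ M)
    (hsum : Summable fun j => c j ^ 2 / κ j) :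
    tauInf κ c t = expSum (solitonCoeff κ c t) (solitonRate κ) := by
  funext x
  have hs := summable_principalMinor (posSemidef_solitonKernel_submatrix c t hκ x)
    (summable_solitonKernel_diag c t hκ hbd hsum x)
  rw [tauInf, ((tendsto_sum_powerset_range hs).congr fun N =>
    (tauN_eq_sum_principalMinor c t N x).symm).limUnder_eq]
  exact tsum_congr (principalMinor_solitonKernel κ c t x)

theorem solitonCoeff_nonneg (hκ : ∀ j, 0 < κ j) (S : Finset ℕ) : 0 ≤ solitonCoeff κ c t S :=
  (posSemidef_solitonKernel_submatrix c t hκ 0 S).det_nonneg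

theorem summable_norm_solitonCoeff_mul_exp (hκ : ∀ j, 0 < κ j) (hbd : ∃ M, ∀ j, κ j ≤ M)
    (hsum : Summable fun j => c j ^ 2 / κ j) (x : ℝ) :
    Summable fun S => ‖solitonCoeff κ c t S‖ * exp (-solitonRate κ S * x) := by
  simp_rw [norm_of_nonneg (solitonCoeff_nonneg c t hκ _), ← principalMinor_solitonKernel]
  exact summable_principalMinor (posSemidef_solitonKernel_submatrix c t hκ x)
    (summable_solitonKernel_diag c t hκ hbd hsum x)

theorem solitonRate_nonneg (hκ : ∀ j, 0 < κ j) (S : Finset ℕ) : 0 ≤ solitonRate κ S := by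
  unfold solitonRate
  have := sum_nonneg fun j (_ : j ∈ S) => (hκ j).le
  positivity

theorem solitonRate_eq_zero_iff (hκ : ∀ j, 0 < κ j) {S : Finset ℕ} :
    solitonRate κ S = 0 ↔ S = ∅ := by
  simp [solitonRate, sum_eq_zero_iff_of_nonneg fun j _ => (hκ j).le, (hκ _).ne',
    eq_empty_iff_forall_notMem]

theorem tendsto_expSum_soliton_atTop (hκ : ∀ j, 0 < κ j) (hbd : ∃ M, ∀ j, κ j ≤ M)
    (hsum : Summable fun j => c j ^ 2 / κ j) :
    Tendsto (expSum (solitonCoeff κ c t) (solitonRate κ)) atTop (𝓝 1) := by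
  have h := tendsto_expSum_atTop (solitonRate_nonneg hκ)
    (summable_norm_solitonCoeff_mul_exp c t hκ hbd hsum)
  simp_rw [solitonRate_eq_zero_iff hκ] at h
  rwa [tsum_ite_eq, solitonCoeff, principalMinor, det_isEmpty] at h

end Soliton

theorem statement13_general (κ c : ℕ → ℝ) (hκ : ∀ j, 0 < κ j)
    (hbd : ∃ M, ∀ j, κ j ≤ M) (hsum : Summable (fun j => (c j) ^ 2 / κ j)) (t : ℝ) :
    Filter.Tendsto (fun x => Vinf κ c t x) Filter.atTop (nhds 0) := by
  have hb := solitonRate_nonneg hκ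
  have ha := summable_norm_solitonCoeff_mul_exp c t hκ hbd hsum
  have ha' := summable_norm_neg_mul_mul_exp hb ha
  have hlog := tendsto_iteratedDeriv_two_log one_ne_zero (hasDerivAt_expSum hb ha)
    (hasDerivAt_expSum hb ha') (tendsto_expSum_soliton_atTop c t hκ hbd hsum)
    (tendsto_expSum_neg_mul_atTop hb ha) (tendsto_expSum_neg_mul_atTop hb ha')
  simpa [Vinf, tauInf_eq_expSum c t hκ hbd hsum] using hlog.const_mul (-2)

/-- For each fixed `t`, `V_∞(t,x) → 0` as `x → +∞`. -/
theorem statement13 (κ c : ℕ → ℝ) (hκ : ∀ j, 0 < κ j)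
    (hbd : ∃ M, ∀ j, κ j ≤ M) (hinj : Function.Injective κ) (hc : ∀ j, 0 < c j)
    (hsum : Summable (fun j => (c j) ^ 2 / κ j)) (t : ℝ) :
    Filter.Tendsto (fun x => Vinf κ c t x) Filter.atTop (nhds 0) :=
  statement13_general κ c hκ hbd hsum t

end
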